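/- Fell's theorem (approximation of vector states): Let A be a unital C*-algebra and let π₁ : A → B(H₁) and π₂ : A → B(H₂) be unital *-homomorphisms (representations) on complex Hilbert spaces H₁, H₂, such that the kernel of π₂ is contained in the kernel of π₁ (for all a ∈ A, π₂(a) = 0 implies π₁(a) = 0). Then for every unit vector ψ ∈ H₁, every ε > 0, and every finite set F ⊆ A, there exist finitely many unit vectors φ₁, …, φₙ ∈ H₂ and nonnegative reals t₁, …, tₙ with Σᵢ tᵢ = 1 such that |⟨ψ, π₁(a) ψ⟩ − Σᵢ tᵢ ⟨φᵢ, π₂(a) φᵢ⟩| < ε for all a ∈ F. -/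

import Mathlib

/-!
If the tuple `(⟪ψ, π₁ a ψ⟫)_{a ∈ F}` were not in the closed convex hull of the tuples
`(⟪φ, π₂ a φ⟫)_{a ∈ F}`, `‖φ‖ = 1`, Hahn–Banach would separate them by a real functional, which has
the form `v ↦ re ∑ cₐ vₐ`. With `b = ℜ (∑ cₐ • a)` this gives a level `u` with
`re ⟪φ, π₂ b φ⟫ < u` for all unit `φ`, i.e. `π₂ (u - b) ≥ 0`, while `re ⟪ψ, π₁ b ψ⟫ > u`.
But positivity passes from `π₂` to `π₁`: if `π₂ c ≥ 0` for self-adjoint `c`, then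
`π₂ c⁻ = (π₂ c)⁻ = 0`, so `π₁ c⁻ = 0 = (π₁ c)⁻` by the kernel inclusion.
-/

open scoped CStarAlgebra ComplexStarModule InnerProductSpace

namespace NonUnitalStarAlgHomClass

variable {F₁ F₂ A B C : Type*} [NonUnitalCStarAlgebra A] [NonUnitalCStarAlgebra B]
  [NonUnitalCStarAlgebra C]
variable [FunLike F₁ A B] [NonUnitalAlgHomClass F₁ ℂ A B] [StarHomClass F₁ A B]
variable [FunLike F₂ A C] [NonUnitalAlgHomClass F₂ ℂ A C] [StarHomClass F₂ A C]

lemma map_negPart (φ : F₁) {a : A} (ha : IsSelfAdjoint a) :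
    φ a⁻ = (φ a)⁻ := by
  simp only [CFC.negPart_def]
  exact map_cfcₙ (S := ℂ) φ _ a (ha := ha) (hφa := ha.map φ)

theorem nonneg_map_of_ker_le [PartialOrder B] [StarOrderedRing B]
    [PartialOrder C] [StarOrderedRing C] (φ₁ : F₁) (φ₂ : F₂)
    (hker : ∀ a, φ₂ a = 0 → φ₁ a = 0) {c : A} (hc : IsSelfAdjoint c) (h : 0 ≤ φ₂ c) :
    0 ≤ φ₁ c := by
  have h₂ : φ₂ c⁻ = 0 := by
    rw [map_negPart φ₂ hc, CFC.negPart_eq_zero_iff _ (hc.map φ₂)]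
    exact h
  rw [← CFC.negPart_eq_zero_iff _ (hc.map φ₁), ← map_negPart φ₁ hc]
  exact hker _ h₂

end NonUnitalStarAlgHomClass

namespace ContinuousLinearMap

section RCLike

variable {𝕜 E : Type*} [RCLike 𝕜] [NormedAddCommGroup E] [InnerProductSpace 𝕜 E]
  [CompleteSpace E]

theorem le_algebraMap_iff_forall_reApplyInnerSelf_le {T : E →L[𝕜] E} (hT : IsSelfAdjoint T)
    (u : ℝ) : T ≤ algebraMap 𝕜 (E →L[𝕜] E) u ↔ ∀ x, ‖x‖ = 1 → T.reApplyInnerSelf x ≤ u := by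
  have hsub (x : E) : (algebraMap 𝕜 (E →L[𝕜] E) u - T).reApplyInnerSelf x
      = u * ‖x‖ ^ 2 - T.reApplyInnerSelf x := by
    rw [Algebra.algebraMap_eq_smul_one (A := E →L[𝕜] E)]
    simp [reApplyInnerSelf_apply, inner_sub_left, inner_smul_left, inner_self_eq_norm_sq_to_K]
  have hu : IsSelfAdjoint (algebraMap 𝕜 (E →L[𝕜] E) u) := .algebraMap _ (RCLike.conj_ofReal u)
  rw [le_def, isPositive_def', and_iff_right (hu.sub hT)]
  simp only [hsub, sub_nonneg]
  refine ⟨fun h x hx ↦ by simpa [hx] using h x, fun h x ↦ ?_⟩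
  rcases eq_or_ne x 0 with rfl | hx
  · simp [reApplyInnerSelf_apply]
  · have := h _ (norm_smul_inv_norm (𝕜 := 𝕜) hx)
    rw [reApplyInnerSelf_smul, norm_inv, RCLike.norm_ofReal, abs_norm, inv_pow,
      inv_mul_le_iff₀ (by positivity)] at this
    linarith

end RCLike

variable {E : Type*} [NormedAddCommGroup E] [InnerProductSpace ℂ E] [CompleteSpace E]

@[simp]
theorem reApplyInnerSelf_realPart (T : E →L[ℂ] E) (x : E) :
    (ℜ T : E →L[ℂ] E).reApplyInnerSelf x = T.reApplyInnerSelf x := by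
  have : (⟪(star T) x, x⟫_ℂ).re = (⟪T x, x⟫_ℂ).re := by
    rw [star_eq_adjoint, adjoint_inner_left, ← RCLike.re_to_complex, inner_re_symm]; rfl
  rw [reApplyInnerSelf_apply, reApplyInnerSelf_apply, realPart_apply_coe, smul_apply, add_apply,
    ← Complex.coe_smul, inner_smul_left, inner_add_left]
  simp only [RCLike.re_to_complex, Complex.conj_ofReal, Complex.re_ofReal_mul, Complex.add_re, this]
  ring

end ContinuousLinearMap

theorem mem_convexHull_iff_exists_fin {R E : Type*} [Field R] [LinearOrder R]
    [IsStrictOrderedRing R] [AddCommGroup E] [Module R E] {s : Set E} {x : E} :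
    x ∈ convexHull R s ↔ ∃ (n : ℕ) (w : Fin n → R) (z : Fin n → E), (∀ i, 0 ≤ w i) ∧
      ∑ i, w i = 1 ∧ (∀ i, z i ∈ s) ∧ ∑ i, w i • z i = x := by
  refine ⟨fun hx ↦ ?_, fun ⟨_, w, z, hw₀, hw₁, hz, hx⟩ ↦
    mem_convexHull_of_exists_fintype w z hw₀ hw₁ hz hx⟩
  obtain ⟨ι, _, w, z, hw₀, hw₁, hz, rfl⟩ := mem_convexHull_iff_exists_fintype.1 hx
  let e := (Fintype.equivFin ι).symm
  exact ⟨_, w ∘ e, z ∘ e, fun i ↦ hw₀ _, by simpa [e.sum_comp] using hw₁, fun i ↦ hz _,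
    e.sum_comp (fun i ↦ w i • z i)⟩

theorem LinearMap.exists_eq_re_mul (g : ℂ →ₗ[ℝ] ℝ) : ∃ w : ℂ, ∀ z, g z = (w * z).re := by
  refine ⟨g 1 - g Complex.I * Complex.I, fun z ↦ ?_⟩
  have hz : z = z.re • (1 : ℂ) + z.im • Complex.I := by simp
  nth_rw 1 [hz]
  rw [map_add, map_smul, map_smul]
  simp only [smul_eq_mul, Complex.mul_re, Complex.sub_re, Complex.sub_im, Complex.mul_im,
    Complex.ofReal_re, Complex.ofReal_im, Complex.I_re, Complex.I_im]
  ring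

theorem LinearMap.exists_eq_re_sum_mul {ι : Type*} [Fintype ι] (f : (ι → ℂ) →ₗ[ℝ] ℝ) :
    ∃ c : ι → ℂ, ∀ v, f v = (∑ i, c i * v i).re := by
  classical
  choose c hc using fun i ↦ (f.comp (LinearMap.single ℝ (fun _ ↦ ℂ) i)).exists_eq_re_mul
  refine ⟨c, fun v ↦ ?_⟩
  conv_lhs => rw [← Finset.univ_sum_single v]
  simp [Complex.re_sum, ← hc]

namespace StarAlgHom

variable {A H H₁ H₂ : Type*} [CStarAlgebra A]
  [NormedAddCommGroup H] [InnerProductSpace ℂ H] [CompleteSpace H]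
  [NormedAddCommGroup H₁] [InnerProductSpace ℂ H₁] [CompleteSpace H₁]
  [NormedAddCommGroup H₂] [InnerProductSpace ℂ H₂] [CompleteSpace H₂]

theorem nonneg_map_algebraMap_sub_realPart_iff (π : A →⋆ₐ[ℂ] (H →L[ℂ] H)) (b : A) (u : ℝ) :
    0 ≤ π (algebraMap ℂ A u - ℜ b) ↔ ∀ φ, ‖φ‖ = 1 → (π b).reApplyInnerSelf φ ≤ u := by
  rw [map_sub, AlgHomClass.commutes, sub_nonneg, map_realPart]
  simpa using ContinuousLinearMap.le_algebraMap_iff_forall_reApplyInnerSelf_le (ℜ (π b)).2 u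

theorem reApplyInnerSelf_le_of_ker_le (π₁ : A →⋆ₐ[ℂ] (H₁ →L[ℂ] H₁))
    (π₂ : A →⋆ₐ[ℂ] (H₂ →L[ℂ] H₂)) (hker : ∀ a, π₂ a = 0 → π₁ a = 0) (b : A) {u : ℝ}
    (h : ∀ φ, ‖φ‖ = 1 → (π₂ b).reApplyInnerSelf φ ≤ u) {ψ : H₁} (hψ : ‖ψ‖ = 1) :
    (π₁ b).reApplyInnerSelf ψ ≤ u := by
  have hc : IsSelfAdjoint (algebraMap ℂ A u - ℜ b) :=
    (IsSelfAdjoint.algebraMap _ (Complex.conj_ofReal u)).sub (ℜ b).2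
  refine (nonneg_map_algebraMap_sub_realPart_iff π₁ b u).1 ?_ ψ hψ
  exact NonUnitalStarAlgHomClass.nonneg_map_of_ker_le π₁ π₂ hker hc
    ((nonneg_map_algebraMap_sub_realPart_iff π₂ b u).2 h)

theorem re_sum_mul_inner_eq_reApplyInnerSelf {ι : Type*} [Fintype ι]
    (π : A →⋆ₐ[ℂ] (H →L[ℂ] H)) (c : ι → ℂ) (a : ι → A) (x : H) :
    (∑ i, c i * ⟪x, π (a i) x⟫_ℂ).re = (π (∑ i, c i • a i)).reApplyInnerSelf x := by
  rw [ContinuousLinearMap.reApplyInnerSelf_apply, ← RCLike.re_to_complex, inner_re_symm]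
  simp [inner_sum, inner_smul_right]

theorem vectorState_mem_closure_convexHull {ι : Type*} [Fintype ι]
    (π₁ : A →⋆ₐ[ℂ] (H₁ →L[ℂ] H₁)) (π₂ : A →⋆ₐ[ℂ] (H₂ →L[ℂ] H₂))
    (hker : ∀ a, π₂ a = 0 → π₁ a = 0) (a : ι → A) {ψ : H₁} (hψ : ‖ψ‖ = 1) :
    (fun i ↦ ⟪ψ, π₁ (a i) ψ⟫_ℂ) ∈
      closure (convexHull ℝ ((fun φ i ↦ ⟪φ, π₂ (a i) φ⟫_ℂ) '' Metric.sphere 0 1)) := by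
  by_contra hnmem
  obtain ⟨f, u, hf_lt, hf_gt⟩ :=
    geometric_hahn_banach_closed_point (convex_convexHull ℝ _).closure isClosed_closure hnmem
  obtain ⟨c, hc⟩ := (f : (ι → ℂ) →ₗ[ℝ] ℝ).exists_eq_re_sum_mul
  have h₂ : ∀ φ : H₂, ‖φ‖ = 1 → (π₂ (∑ i, c i • a i)).reApplyInnerSelf φ ≤ u := by
    intro φ hφ
    rw [← re_sum_mul_inner_eq_reApplyInnerSelf, ← hc]
    exact (hf_lt _ (subset_closure (subset_convexHull ℝ _ ⟨φ, by simpa using hφ, rfl⟩))).le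
  have h₁ := reApplyInnerSelf_le_of_ker_le π₁ π₂ hker _ h₂ hψ
  rw [← re_sum_mul_inner_eq_reApplyInnerSelf, ← hc] at h₁
  exact (h₁.trans_lt hf_gt).false

end StarAlgHom

/-- Fell's theorem, direction (i) ⇒ (iv): if `π₁`, `π₂` are representations of a unital
C*-algebra `A` with `ker π₂ ⊆ ker π₁`, then every vector state of `π₁` is approximated,
uniformly on finite sets of observables, by convex combinations of vector states of `π₂`. -/
theorem fell_vector_state_approximation
    {A : Type*} [NormedRing A] [StarRing A] [CStarRing A]
    [NormedAlgebra ℂ A] [StarModule ℂ A] [CompleteSpace A]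
    {H₁ H₂ : Type*}
    [NormedAddCommGroup H₁] [InnerProductSpace ℂ H₁] [CompleteSpace H₁]
    [NormedAddCommGroup H₂] [InnerProductSpace ℂ H₂] [CompleteSpace H₂]
    (π₁ : A →⋆ₐ[ℂ] (H₁ →L[ℂ] H₁)) (π₂ : A →⋆ₐ[ℂ] (H₂ →L[ℂ] H₂))
    (hker : ∀ a : A, π₂ a = 0 → π₁ a = 0)
    (ψ : H₁) (hψ : ‖ψ‖ = 1) (ε : ℝ) (hε : 0 < ε) (F : Finset A) :
    ∃ (n : ℕ) (φ : Fin n → H₂) (t : Fin n → ℝ),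
      (∀ i, ‖φ i‖ = 1) ∧ (∀ i, 0 ≤ t i) ∧ (∑ i, t i) = 1 ∧
      ∀ a ∈ F,
        ‖(inner ℂ ψ (π₁ a ψ) : ℂ) - ∑ i, (t i : ℂ) * (inner ℂ (φ i) (π₂ a (φ i)) : ℂ)‖ < ε := by
  let : CStarAlgebra A := {}
  obtain ⟨q, hq, hdist⟩ := Metric.mem_closure_iff.1
    (StarAlgHom.vectorState_mem_closure_convexHull π₁ π₂ hker (fun a : F ↦ (a : A)) hψ) ε hε
  obtain ⟨n, t, z, ht₀, ht₁, hz, rfl⟩ := mem_convexHull_iff_exists_fin.1 hq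
  choose φ hφ hφz using hz
  refine ⟨n, φ, t, by simpa using hφ, ht₀, ht₁, fun a ha ↦ ?_⟩
  calc _ = dist ((fun a : F ↦ ⟪ψ, π₁ a ψ⟫_ℂ) ⟨a, ha⟩) ((∑ i, t i • z i) ⟨a, ha⟩) := by
        simp [dist_eq_norm, ← hφz, Complex.real_smul]
    _ ≤ _ := dist_le_pi_dist (fun a : F ↦ ⟪ψ, π₁ a ψ⟫_ℂ) _ ⟨a, ha⟩
    _ < ε := hdist
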